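/- Let n, s, N, p ∈ ℕ with s, N ≥ 1, and consider matrices A(m), B(m) ∈ Matrix (Fin n) (Fin n) ℝ for m = 1,…,N, scalars α(i,m), β(i,m) ∈ ℝ for i = 1,…,s and m = 1,…,N, and remainder functions R(i,m) : ℝ → Matrix (Fin n) (Fin n) ℝ with R(i,m)(h) = O(h^(p+2)) as h → 0 for every i, m. Define the ordered products P(h) = exp(α(1,1)·h·A(1) + β(1,1)·h^(p+1)·B(1) + R(1,1)(h)) · exp(α(1,2)·h·A(2) + β(1,2)·h^(p+1)·B(2) + R(1,2)(h)) ⋯ exp(α(s,N)·h·A(N) + β(s,N)·h^(p+1)·B(N) + R(s,N)(h)) and Q(h) = exp(α(1,1)·h·A(1)) · exp(α(1,2)·h·A(2)) ⋯ exp(α(s,N)·h·A(N)), both taken left-to-right in lexicographic order of the index pairs (i,m). Then the function h ↦ P(h) − Q(h) − h^(p+1) · (Σ_{m=1}^{N} Σ_{i=1}^{s} β(i,m) · B(m)) is O(h^(p+2)) as h → 0. -/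

import Mathlib

open Asymptotics NormedSpace
open scoped Topology

attribute [local instance] Matrix.normedAddCommGroup

open scoped Nat

section Est
variable {𝔸 : Type*} [NormedRing 𝔸] [NormedAlgebra ℝ 𝔸] [CompleteSpace 𝔸]

lemma pow_sub_pow_est (u v : 𝔸) {m : ℝ} (hu : ‖u‖ ≤ m) (hv : ‖v‖ ≤ m) (k : ℕ) :
    ‖u ^ (k + 1) - v ^ (k + 1)‖ ≤ (k + 1) * m ^ k * ‖u - v‖ := by
  have hm : 0 ≤ m := le_trans (norm_nonneg u) hu
  induction k with
  | zero => simp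
  | succ k ih =>
    have key : u ^ (k + 2) - v ^ (k + 2)
        = u * (u ^ (k + 1) - v ^ (k + 1)) + (u - v) * v ^ (k + 1) := by
      rw [mul_sub, sub_mul, ← pow_succ' u (k + 1), ← pow_succ' v (k + 1)]; abel
    have h1 : ‖u * (u ^ (k + 1) - v ^ (k + 1))‖ ≤ m * ((k + 1) * m ^ k * ‖u - v‖) := by
      calc ‖u * (u ^ (k + 1) - v ^ (k + 1))‖ ≤ ‖u‖ * ‖u ^ (k + 1) - v ^ (k + 1)‖ := norm_mul_le _ _
        _ ≤ m * ((k + 1) * m ^ k * ‖u - v‖) := by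
            apply mul_le_mul hu ih (norm_nonneg _) hm
    have h2 : ‖(u - v) * v ^ (k + 1)‖ ≤ ‖u - v‖ * m ^ (k + 1) := by
      calc ‖(u - v) * v ^ (k + 1)‖ ≤ ‖u - v‖ * ‖v ^ (k + 1)‖ := norm_mul_le _ _
        _ ≤ ‖u - v‖ * m ^ (k + 1) := by
            apply mul_le_mul_of_nonneg_left _ (norm_nonneg _)
            calc ‖v ^ (k + 1)‖ ≤ ‖v‖ ^ (k + 1) := norm_pow_le' v (Nat.succ_pos k)
              _ ≤ m ^ (k + 1) := pow_le_pow_left₀ (norm_nonneg _) hv _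
    calc ‖u ^ (k + 2) - v ^ (k + 2)‖
        ≤ m * ((k + 1) * m ^ k * ‖u - v‖) + ‖u - v‖ * m ^ (k + 1) := by
          rw [key]; exact (norm_add_le _ _).trans (add_le_add h1 h2)
      _ = ((k + 1 : ℕ) + 1) * m ^ (k + 1) * ‖u - v‖ := by push_cast; ring

lemma exp_est (u v : 𝔸) {m : ℝ} (hu : ‖u‖ ≤ m) (hv : ‖v‖ ≤ m) :
    ‖exp u - exp v - (u - v)‖ ≤ ‖u - v‖ * m * Real.exp m := by
  have hm : 0 ≤ m := le_trans (norm_nonneg u) hu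
  have hsu := NormedSpace.expSeries_summable' (𝕂 := ℝ) u
  have hsv := NormedSpace.expSeries_summable' (𝕂 := ℝ) v
  have hfsum : Summable fun k : ℕ => (k ! : ℝ)⁻¹ • (u ^ k - v ^ k) := by
    simpa [smul_sub] using hsu.sub hsv
  have hdiff : exp u - exp v = ∑' k : ℕ, (k ! : ℝ)⁻¹ • (u ^ k - v ^ k) := by
    rw [exp_eq_tsum ℝ]
    beta_reduce
    rw [← Summable.tsum_sub hsu hsv]
    simp [smul_sub]
  have htail := Summable.sum_add_tsum_nat_add (f := fun k : ℕ => (k ! : ℝ)⁻¹ • (u ^ k - v ^ k)) 2 hfsum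
  have hmain : exp u - exp v - (u - v)
      = ∑' k : ℕ, ((k + 2)! : ℝ)⁻¹ • (u ^ (k + 2) - v ^ (k + 2)) := by
    rw [hdiff, ← htail]
    simp [Finset.sum_range_succ]
  have hterm : ∀ k : ℕ, ‖((k + 2)! : ℝ)⁻¹ • (u ^ (k + 2) - v ^ (k + 2))‖
      ≤ ‖u - v‖ * m * (m ^ k / k !) := by
    intro k
    have hfact : ((k + 2)! : ℝ) = (k + 2) * (k + 1)! := by
      exact_mod_cast Nat.factorial_succ (k + 1)
    have hple := pow_sub_pow_est u v hu hv (k + 1)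
    rw [norm_smul, Real.norm_eq_abs, abs_of_nonneg (by positivity)]
    calc ((k + 2)! : ℝ)⁻¹ * ‖u ^ (k + 2) - v ^ (k + 2)‖
        ≤ ((k + 2)! : ℝ)⁻¹ * (((k + 1 : ℕ) + 1) * m ^ (k + 1) * ‖u - v‖) := by
          apply mul_le_mul_of_nonneg_left _ (by positivity)
          exact_mod_cast hple
      _ = m ^ (k + 1) * ‖u - v‖ / (k + 1)! := by
          rw [hfact]
          push_cast
          field_simp
          ring
      _ ≤ ‖u - v‖ * m * (m ^ k / k !) := by
          rw [pow_succ']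
          rw [div_le_iff₀ (by positivity)]
          have h1 : (k ! : ℝ) ≤ (k + 1)! := by
            exact_mod_cast Nat.factorial_le (Nat.le_succ k)
          have h2 : ‖u - v‖ * m * (m ^ k / k !) * (k + 1)!
              = (m * m ^ k * ‖u - v‖) * ((k + 1)! / k !) := by ring
          rw [h2]
          have h3 : (1 : ℝ) ≤ ((k + 1)! : ℝ) / k ! := by
            rw [le_div_iff₀ (by positivity)]; simpa using h1
          nlinarith [mul_nonneg (mul_nonneg (pow_nonneg hm k) hm) (norm_nonneg (u - v))]
  have hsum2 : Summable fun k : ℕ => ‖u - v‖ * m * (m ^ k / k !) :=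
    (Real.summable_pow_div_factorial m).mul_left _
  have hfs : Summable fun k : ℕ => ‖((k + 2)! : ℝ)⁻¹ • (u ^ (k + 2) - v ^ (k + 2))‖ :=
    Summable.of_nonneg_of_le (fun k => norm_nonneg _) hterm hsum2
  rw [hmain]
  calc ‖∑' k : ℕ, ((k + 2)! : ℝ)⁻¹ • (u ^ (k + 2) - v ^ (k + 2))‖
      ≤ ∑' k : ℕ, ‖((k + 2)! : ℝ)⁻¹ • (u ^ (k + 2) - v ^ (k + 2))‖ := norm_tsum_le_tsum_norm hfs
    _ ≤ ∑' k : ℕ, ‖u - v‖ * m * (m ^ k / k !) := Summable.tsum_le_tsum hterm hfs hsum2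
    _ = ‖u - v‖ * m * ∑' k : ℕ, (m ^ k / k !) := tsum_mul_left
    _ = ‖u - v‖ * m * Real.exp m := by
        congr 1
        rw [Real.exp_eq_exp_ℝ, exp_eq_tsum_div]

end Est

lemma pow_isBigO {a b : ℕ} (hab : b ≤ a) :
    (fun h : ℝ => h ^ a) =O[𝓝 (0 : ℝ)] fun h : ℝ => h ^ b := by
  rw [Asymptotics.isBigO_iff]
  refine ⟨1, ?_⟩
  have h1 : ∀ᶠ h : ℝ in 𝓝 0, |h| ≤ 1 := by
    filter_upwards [eventually_abs_sub_lt 0 one_pos] with h hh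
    simpa using hh.le
  filter_upwards [h1] with h hh
  rw [Real.norm_eq_abs, Real.norm_eq_abs, abs_pow, abs_pow, one_mul]
  exact pow_le_pow_of_le_one (abs_nonneg h) hh hab

lemma smul_const_isBigO {E : Type*} [SeminormedAddCommGroup E] [NormedSpace ℝ E]
    (f : ℝ → ℝ) (c : E) : (fun x => f x • c) =O[𝓝 (0 : ℝ)] f := by
  rw [Asymptotics.isBigO_iff]
  exact ⟨‖c‖, Filter.Eventually.of_forall fun x => by
    rw [norm_smul]; exact le_of_eq (mul_comm _ _)⟩

section LinftySection

variable {d : ℕ}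

attribute [local instance] Matrix.linftyOpNormedRing Matrix.linftyOpNormedAlgebra

lemma max_norm_isBigO {u v : ℝ → Matrix (Fin d) (Fin d) ℝ}
    (hu : u =O[𝓝 (0 : ℝ)] fun h : ℝ => h) (hv : v =O[𝓝 (0 : ℝ)] fun h : ℝ => h) :
    (fun h => max ‖u h‖ ‖v h‖) =O[𝓝 (0 : ℝ)] fun h : ℝ => h := by
  have h1 : (fun h => max ‖u h‖ ‖v h‖) =O[𝓝 (0 : ℝ)] fun h => ‖u h‖ + ‖v h‖ := by
    rw [Asymptotics.isBigO_iff]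
    refine ⟨1, Filter.Eventually.of_forall fun x => ?_⟩
    rw [one_mul, Real.norm_eq_abs, Real.norm_eq_abs,
      abs_of_nonneg (le_max_iff.mpr (Or.inl (norm_nonneg _))),
      abs_of_nonneg (add_nonneg (norm_nonneg _) (norm_nonneg _))]
    exact max_le (le_add_of_nonneg_right (norm_nonneg _))
      (le_add_of_nonneg_left (norm_nonneg _))
  exact h1.trans (hu.norm_left.add hv.norm_left)

lemma exp_diff_isBigO {u v : ℝ → Matrix (Fin d) (Fin d) ℝ}
    (hu : u =O[𝓝 (0 : ℝ)] fun h : ℝ => h) (hv : v =O[𝓝 (0 : ℝ)] fun h : ℝ => h) :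
    (fun h => exp (u h) - exp (v h) - (u h - v h))
      =O[𝓝 (0 : ℝ)] fun h => ‖u h - v h‖ * max ‖u h‖ ‖v h‖ := by
  have hm := max_norm_isBigO hu hv
  have hm0 : Filter.Tendsto (fun h => max ‖u h‖ ‖v h‖) (𝓝 (0 : ℝ)) (𝓝 0) :=
    hm.trans_tendsto (by exact Filter.tendsto_id)
  have hsmall : ∀ᶠ h : ℝ in 𝓝 0, max ‖u h‖ ‖v h‖ < 1 :=
    hm0.eventually (gt_mem_nhds one_pos)
  rw [Asymptotics.isBigO_iff]
  refine ⟨3, ?_⟩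
  filter_upwards [hsmall] with h hh
  have hmn : (0:ℝ) ≤ max ‖u h‖ ‖v h‖ := le_max_iff.mpr (Or.inl (norm_nonneg _))
  have he : Real.exp (max ‖u h‖ ‖v h‖) ≤ 3 := by
    calc Real.exp (max ‖u h‖ ‖v h‖) ≤ Real.exp 1 := Real.exp_le_exp.mpr hh.le
      _ ≤ 3 := by
        have := Real.exp_one_lt_d9
        norm_num at this ⊢
        linarith
  calc ‖exp (u h) - exp (v h) - (u h - v h)‖
      ≤ ‖u h - v h‖ * max ‖u h‖ ‖v h‖ * Real.exp (max ‖u h‖ ‖v h‖) :=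
        @exp_est _ _ _ (by exact (inferInstance : CompleteSpace (Fin d → Fin d → ℝ))) (u h) (v h) _ (le_max_left _ _) (le_max_right _ _)
    _ ≤ ‖u h - v h‖ * max ‖u h‖ ‖v h‖ * 3 := by
        apply mul_le_mul_of_nonneg_left he (mul_nonneg (norm_nonneg _) hmn)
    _ = 3 * (‖u h - v h‖ * max ‖u h‖ ‖v h‖) := by ring
    _ ≤ 3 * ‖‖u h - v h‖ * max ‖u h‖ ‖v h‖‖ := by
        apply mul_le_mul_of_nonneg_left (le_abs_self _) (by norm_num)

lemma gone_est_lin (A : Matrix (Fin d) (Fin d) ℝ) (a : ℝ) :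
    (fun h : ℝ => exp ((a * h) • A) - 1) =O[𝓝 (0 : ℝ)] fun h : ℝ => h := by
  set v : ℝ → Matrix (Fin d) (Fin d) ℝ := fun h => (a * h) • A with hv
  have hvO : v =O[𝓝 (0 : ℝ)] fun h : ℝ => h := by
    have : v = fun h : ℝ => h • (a • A) := by
      funext h; rw [hv]; rw [smul_smul, mul_comm]
    rw [this]
    exact smul_const_isBigO (fun h : ℝ => h) (a • A)
  have h0 : (fun _ : ℝ => (0 : Matrix (Fin d) (Fin d) ℝ)) =O[𝓝 (0 : ℝ)] fun h : ℝ => h :=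
    Asymptotics.isBigO_zero _ _
  have hd := exp_diff_isBigO hvO h0
  have heq : (fun h : ℝ => exp ((a * h) • A) - 1)
      = fun h : ℝ => (exp (v h) - exp (0 : Matrix (Fin d) (Fin d) ℝ)
        - (v h - 0)) + v h := by
    funext h; rw [exp_zero]; abel
  rw [heq]
  have h1 : (fun h : ℝ => exp (v h) - exp (0 : Matrix (Fin d) (Fin d) ℝ) - (v h - 0))
      =O[𝓝 (0 : ℝ)] fun h : ℝ => h := by
    refine (hd.trans ?_)
    have h2 : (fun h : ℝ => ‖v h - 0‖ * max ‖v h‖ ‖(0 : Matrix (Fin d) (Fin d) ℝ)‖)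
        =O[𝓝 (0 : ℝ)] fun h : ℝ => h * h :=
      (hvO.sub h0).norm_left.mul (max_norm_isBigO hvO h0)
    refine h2.trans ?_
    have h3 : (fun h : ℝ => h * h) =O[𝓝 (0 : ℝ)] fun h : ℝ => h := by
      have := pow_isBigO (a := 2) (b := 1) (by norm_num)
      simpa [pow_succ, pow_one] using this
    exact h3
  exact h1.add hvO

lemma factor_est_lin (p : ℕ) (A B : Matrix (Fin d) (Fin d) ℝ) (a b : ℝ)
    (R : ℝ → Matrix (Fin d) (Fin d) ℝ)
    (hR : R =O[𝓝 (0 : ℝ)] fun h : ℝ => h ^ (p + 2)) :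
    (fun h : ℝ => exp ((a * h) • A + (b * h ^ (p + 1)) • B + R h) - exp ((a * h) • A)
        - h ^ (p + 1) • (b • B)) =O[𝓝 (0 : ℝ)] fun h : ℝ => h ^ (p + 2) := by
  set v : ℝ → Matrix (Fin d) (Fin d) ℝ := fun h => (a * h) • A with hvdef
  set u : ℝ → Matrix (Fin d) (Fin d) ℝ :=
    fun h => (a * h) • A + (b * h ^ (p + 1)) • B + R h with hudef
  have hBsm : (fun h : ℝ => (b * h ^ (p + 1)) • B)
      = fun h : ℝ => (h ^ (p + 1)) • (b • B) := by
    funext h; rw [smul_smul, mul_comm]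
  have hBO : (fun h : ℝ => (b * h ^ (p + 1)) • B) =O[𝓝 (0 : ℝ)] fun h : ℝ => h ^ (p + 1) := by
    rw [hBsm]; exact smul_const_isBigO _ _
  have hEO : (fun h : ℝ => u h - v h) =O[𝓝 (0 : ℝ)] fun h : ℝ => h ^ (p + 1) := by
    have : (fun h : ℝ => u h - v h) = fun h : ℝ => (b * h ^ (p + 1)) • B + R h := by
      funext h; rw [hudef, hvdef]; simp only [add_assoc, add_sub_cancel_left]
    rw [this]
    exact hBO.add (hR.trans (pow_isBigO (Nat.le_succ _)))
  have hone : ∀ c : ℕ, 1 ≤ c → (fun h : ℝ => h ^ c) =O[𝓝 (0 : ℝ)] fun h : ℝ => h := by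
    intro c hc
    have := pow_isBigO (a := c) (b := 1) hc
    simpa [pow_one] using this
  have hvO : v =O[𝓝 (0 : ℝ)] fun h : ℝ => h := by
    have : v = fun h : ℝ => h • (a • A) := by
      funext h; rw [hvdef]; rw [smul_smul, mul_comm]
    rw [this]
    exact smul_const_isBigO (fun h : ℝ => h) (a • A)
  have huO : u =O[𝓝 (0 : ℝ)] fun h : ℝ => h := by
    have : u = fun h : ℝ => v h + ((b * h ^ (p + 1)) • B + R h) := by
      funext h; rw [hudef, hvdef]; abel
    rw [this]
    exact hvO.add ((hBO.add (hR.trans (pow_isBigO (Nat.le_succ _)))).trans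
      (hone (p + 1) (Nat.succ_le_succ (Nat.zero_le _))))
  have hd := exp_diff_isBigO huO hvO
  have hd2 : (fun h : ℝ => exp (u h) - exp (v h) - (u h - v h))
      =O[𝓝 (0 : ℝ)] fun h : ℝ => h ^ (p + 2) := by
    refine hd.trans ?_
    have h2 : (fun h : ℝ => ‖u h - v h‖ * max ‖u h‖ ‖v h‖)
        =O[𝓝 (0 : ℝ)] fun h : ℝ => h ^ (p + 1) * h :=
      hEO.norm_left.mul (max_norm_isBigO huO hvO)
    have h3 : (fun h : ℝ => h ^ (p + 1) * h) = fun h : ℝ => h ^ (p + 2) := by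
      funext h; rw [← pow_succ]
    rw [h3] at h2
    exact h2
  have heq : (fun h : ℝ => exp ((a * h) • A + (b * h ^ (p + 1)) • B + R h)
        - exp ((a * h) • A) - h ^ (p + 1) • (b • B))
      = fun h : ℝ => (exp (u h) - exp (v h) - (u h - v h)) + R h := by
    funext h
    simp only [hudef, hvdef]
    rw [smul_smul, mul_comm (h ^ (p + 1)) b]
    abel
  rw [heq]
  exact hd2.add hR

lemma pin_le_lin (X : Matrix (Fin d) (Fin d) ℝ) :
    @norm _ (Matrix.normedAddCommGroup :
      NormedAddCommGroup (Matrix (Fin d) (Fin d) ℝ)).toNorm X ≤ 1 * ‖X‖ := by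
  rw [one_mul]
  have hnn : (0:ℝ) ≤ ‖X‖ := norm_nonneg X
  rw [Matrix.norm_le_iff hnn]
  intro i j
  have h1 : ‖X i j‖₊ ≤ ‖X‖₊ := by
    rw [Matrix.linfty_opNNNorm_def]
    calc ‖X i j‖₊ ≤ ∑ j' : Fin d, ‖X i j'‖₊ :=
          Finset.single_le_sum (f := fun j' : Fin d => ‖X i j'‖₊)
            (fun _ _ => zero_le) (Finset.mem_univ j)
      _ ≤ _ := Finset.le_sup (f := fun i : Fin d => ∑ j' : Fin d, ‖X i j'‖₊)
          (Finset.mem_univ i)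
  exact_mod_cast h1

lemma lin_le_pin (X : Matrix (Fin d) (Fin d) ℝ) :
    ‖X‖ ≤ (d : ℝ) * @norm _ (Matrix.normedAddCommGroup :
      NormedAddCommGroup (Matrix (Fin d) (Fin d) ℝ)).toNorm X := by
  set q : ℝ := @norm _ (Matrix.normedAddCommGroup :
      NormedAddCommGroup (Matrix (Fin d) (Fin d) ℝ)).toNorm X with hqdef
  have hq : ∀ i j, ‖X i j‖ ≤ q := fun i j => Matrix.norm_entry_le_entrywise_sup_norm X
  have hq0 : (0 : ℝ) ≤ q :=
    @norm_nonneg _ (@SeminormedAddCommGroup.toSeminormedAddGroup _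
      (@NormedAddCommGroup.toSeminormedAddCommGroup _ Matrix.normedAddCommGroup)) X
  rw [Matrix.linfty_opNorm_def X]
  have h2 : ∀ i : Fin d, ∑ j : Fin d, ‖X i j‖₊ ≤ ⟨d * q, by positivity⟩ := by
    intro i
    calc ∑ j : Fin d, ‖X i j‖₊ ≤ @Finset.sum (Fin d) NNReal _ Finset.univ fun _j => ⟨q, hq0⟩ :=
          Finset.sum_le_sum fun j _ => by
            apply NNReal.coe_le_coe.mp
            exact (hq i j)
      _ = (id ⟨d * q, by positivity⟩ : NNReal) := by
          erw [Finset.sum_const, Finset.card_univ, Fintype.card_fin]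
          apply NNReal.eq
          erw [NNReal.coe_nsmul, nsmul_eq_mul]
          rfl
  have h3 : ((Finset.univ : Finset (Fin d)).sup fun i => ∑ j : Fin d, ‖X i j‖₊)
      ≤ ⟨d * q, by positivity⟩ := Finset.sup_le fun i _ => h2 i
  exact_mod_cast h3

end LinftySection
lemma isBigO_transfer {E : Type*} {N1 N2 : Norm E} {f : ℝ → E} {g : ℝ → ℝ} {C : ℝ}
    (hC : 0 ≤ C) (cmp : ∀ x : E, @norm E N1 x ≤ C * @norm E N2 x)
    (h : @Asymptotics.IsBigO ℝ E ℝ N2 _ (𝓝 (0 : ℝ)) f g) :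
    @Asymptotics.IsBigO ℝ E ℝ N1 _ (𝓝 (0 : ℝ)) f g := by
  obtain ⟨c, hc⟩ := (@Asymptotics.isBigO_iff ℝ E ℝ N2 _ f g (𝓝 (0 : ℝ))).mp h
  refine (@Asymptotics.isBigO_iff ℝ E ℝ N1 _ f g (𝓝 (0 : ℝ))).mpr ⟨C * c, ?_⟩
  filter_upwards [hc] with x hx
  calc @norm E N1 (f x) ≤ C * @norm E N2 (f x) := cmp (f x)
    _ ≤ C * (c * ‖g x‖) := mul_le_mul_of_nonneg_left hx hC
    _ = C * c * ‖g x‖ := by ring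

attribute [local instance] Matrix.normedSpace

section Pinned

variable {d : ℕ}

lemma pin_norm_mul (X Y : Matrix (Fin d) (Fin d) ℝ) : ‖X * Y‖ ≤ d * ‖X‖ * ‖Y‖ := by
  rw [Matrix.norm_le_iff (by positivity)]
  intro i j
  rw [Matrix.mul_apply]
  calc ‖∑ k : Fin d, X i k * Y k j‖ ≤ ∑ k : Fin d, ‖X i k * Y k j‖ := norm_sum_le _ _
    _ ≤ ∑ _k : Fin d, ‖X‖ * ‖Y‖ := Finset.sum_le_sum fun k _ => by
        rw [norm_mul]
        exact mul_le_mul (Matrix.norm_entry_le_entrywise_sup_norm X)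
          (Matrix.norm_entry_le_entrywise_sup_norm Y) (norm_nonneg _) (norm_nonneg _)
    _ = d * ‖X‖ * ‖Y‖ := by
        rw [Finset.sum_const, Finset.card_univ, Fintype.card_fin, nsmul_eq_mul]; ring

lemma isBigO_matmul {f₁ f₂ : ℝ → Matrix (Fin d) (Fin d) ℝ} {g₁ g₂ : ℝ → ℝ}
    (h₁ : f₁ =O[𝓝 (0 : ℝ)] g₁) (h₂ : f₂ =O[𝓝 (0 : ℝ)] g₂) :
    (fun h => f₁ h * f₂ h) =O[𝓝 (0 : ℝ)] fun h => g₁ h * g₂ h := by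
  obtain ⟨c₁, hc₁⟩ := h₁.bound
  obtain ⟨c₂, hc₂⟩ := h₂.bound
  refine Asymptotics.isBigO_iff.mpr ⟨d * c₁ * c₂, ?_⟩
  filter_upwards [hc₁, hc₂] with x k1 k2
  have h1n : (0 : ℝ) ≤ c₁ * ‖g₁ x‖ := le_trans (norm_nonneg _) k1
  have h2n : (0 : ℝ) ≤ c₂ * ‖g₂ x‖ := le_trans (norm_nonneg _) k2
  calc ‖f₁ x * f₂ x‖ ≤ d * ‖f₁ x‖ * ‖f₂ x‖ := pin_norm_mul _ _
    _ ≤ d * (c₁ * ‖g₁ x‖) * (c₂ * ‖g₂ x‖) := by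
        have hd : (0 : ℝ) ≤ d := Nat.cast_nonneg d
        have := mul_le_mul k1 k2 (norm_nonneg _) h1n
        nlinarith [norm_nonneg (f₁ x), norm_nonneg (f₂ x)]
    _ = d * c₁ * c₂ * ‖g₁ x * g₂ x‖ := by rw [norm_mul]; ring

lemma id_isBigO_one : (fun h : ℝ => h) =O[𝓝 (0 : ℝ)] fun _ : ℝ => (1 : ℝ) := by
  have := pow_isBigO (a := 1) (b := 0) (Nat.zero_le 1)
  simpa using this

lemma prod_one_est {ι : Type*} (l : List ι) (g : ι → ℝ → Matrix (Fin d) (Fin d) ℝ)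
    (hg : ∀ i ∈ l, (fun h => g i h - 1) =O[𝓝 (0 : ℝ)] fun h : ℝ => h) :
    (fun h => (l.map fun i => g i h).prod - 1) =O[𝓝 (0 : ℝ)] fun h : ℝ => h := by
  induction l with
  | nil =>
    simp only [List.map_nil, List.prod_nil, sub_self]
    exact Asymptotics.isBigO_zero _ _
  | cons a t ih =>
    have hga := hg a List.mem_cons_self
    have ht := ih fun i hi => hg i (List.mem_cons_of_mem a hi)
    have hone_const : (fun _ : ℝ => (1 : Matrix (Fin d) (Fin d) ℝ))
        =O[𝓝 (0 : ℝ)] fun _ : ℝ => (1 : ℝ) := Asymptotics.isBigO_const_const _ one_ne_zero _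
    have hQb : (fun h => (t.map fun i => g i h).prod) =O[𝓝 (0 : ℝ)] fun _ : ℝ => (1 : ℝ) := by
      have := (ht.trans id_isBigO_one).add hone_const
      simpa using this
    have heq : (fun h => ((a :: t).map fun i => g i h).prod - 1)
        = fun h => (g a h - 1) * (t.map fun i => g i h).prod
          + ((t.map fun i => g i h).prod - 1) := by
      funext h
      simp only [List.map_cons, List.prod_cons, sub_mul, one_mul]
      abel
    rw [heq]
    have hA : (fun h => (g a h - 1) * (t.map fun i => g i h).prod)
        =O[𝓝 (0 : ℝ)] fun h : ℝ => h := by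
      have := isBigO_matmul hga hQb
      simpa using this
    exact hA.add ht

lemma prod_key {ι : Type*} (p : ℕ) (l : List ι)
    (f g : ι → ℝ → Matrix (Fin d) (Fin d) ℝ) (c : ι → Matrix (Fin d) (Fin d) ℝ)
    (hg : ∀ i ∈ l, (fun h => g i h - 1) =O[𝓝 (0 : ℝ)] fun h : ℝ => h)
    (hf : ∀ i ∈ l, (fun h => f i h - g i h - h ^ (p + 1) • c i)
      =O[𝓝 (0 : ℝ)] fun h : ℝ => h ^ (p + 2)) :
    (fun h => (l.map fun i => f i h).prod - (l.map fun i => g i h).prod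
      - h ^ (p + 1) • (l.map c).sum) =O[𝓝 (0 : ℝ)] fun h : ℝ => h ^ (p + 2) := by
  induction l with
  | nil =>
    simp only [List.map_nil, List.prod_nil, List.sum_nil, smul_zero, sub_self, sub_zero]
    exact Asymptotics.isBigO_zero _ _
  | cons a t ih =>
    have hga := hg a List.mem_cons_self
    have hfa := hf a List.mem_cons_self
    have hIH := ih (fun i hi => hg i (List.mem_cons_of_mem a hi))
      (fun i hi => hf i (List.mem_cons_of_mem a hi))
    have hQt1 := prod_one_est t g fun i hi => hg i (List.mem_cons_of_mem a hi)
    have hsmul : ∀ X : Matrix (Fin d) (Fin d) ℝ,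
        (fun h : ℝ => h ^ (p + 1) • X) =O[𝓝 (0 : ℝ)] fun h : ℝ => h ^ (p + 1) :=
      fun X => smul_const_isBigO _ X
    have hp1 : (fun h : ℝ => h ^ (p + 1)) =O[𝓝 (0 : ℝ)] fun h : ℝ => h := by
      have := pow_isBigO (a := p + 1) (b := 1) (Nat.succ_le_succ (Nat.zero_le p))
      simpa using this
    have hPQ : (fun h => (t.map fun i => f i h).prod - (t.map fun i => g i h).prod)
        =O[𝓝 (0 : ℝ)] fun h : ℝ => h ^ (p + 1) := by
      have h1 := hIH.trans (pow_isBigO (Nat.le_succ (p + 1)))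
      have h2 := h1.add (hsmul ((t.map c).sum))
      simpa using h2
    have hPt1 : (fun h => (t.map fun i => f i h).prod - 1) =O[𝓝 (0 : ℝ)] fun h : ℝ => h := by
      have := (hPQ.trans hp1).add hQt1
      simpa using this
    have hone_const : (fun _ : ℝ => (1 : Matrix (Fin d) (Fin d) ℝ))
        =O[𝓝 (0 : ℝ)] fun _ : ℝ => (1 : ℝ) := Asymptotics.isBigO_const_const _ one_ne_zero _
    have hPtb : (fun h => (t.map fun i => f i h).prod) =O[𝓝 (0 : ℝ)] fun _ : ℝ => (1 : ℝ) := by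
      have := (hPt1.trans id_isBigO_one).add hone_const
      simpa using this
    have hgab : (fun h => g a h) =O[𝓝 (0 : ℝ)] fun _ : ℝ => (1 : ℝ) := by
      have := (hga.trans id_isBigO_one).add hone_const
      simpa using this
    have hE1 : (fun h => (f a h - g a h - h ^ (p + 1) • c a) * (t.map fun i => f i h).prod)
        =O[𝓝 (0 : ℝ)] fun h : ℝ => h ^ (p + 2) := by
      have := isBigO_matmul hfa hPtb
      simpa using this
    have hE2 : (fun h => (h ^ (p + 1) • c a) * ((t.map fun i => f i h).prod - 1))
        =O[𝓝 (0 : ℝ)] fun h : ℝ => h ^ (p + 2) := by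
      have := isBigO_matmul (hsmul (c a)) hPt1
      have heq2 : (fun h : ℝ => h ^ (p + 1) * h) = fun h : ℝ => h ^ (p + 2) := by
        funext h; rw [← pow_succ]
      rwa [heq2] at this
    have hE3 : (fun h => g a h * ((t.map fun i => f i h).prod - (t.map fun i => g i h).prod
        - h ^ (p + 1) • (t.map c).sum)) =O[𝓝 (0 : ℝ)] fun h : ℝ => h ^ (p + 2) := by
      have := isBigO_matmul hgab hIH
      simpa using this
    have hE4 : (fun h => (g a h - 1) * (h ^ (p + 1) • (t.map c).sum))
        =O[𝓝 (0 : ℝ)] fun h : ℝ => h ^ (p + 2) := by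
      have := isBigO_matmul hga (hsmul ((t.map c).sum))
      have heq4 : (fun h : ℝ => h * h ^ (p + 1)) = fun h : ℝ => h ^ (p + 2) := by
        funext h; rw [← pow_succ']
      rwa [heq4] at this
    have heq : (fun h => ((a :: t).map fun i => f i h).prod
          - ((a :: t).map fun i => g i h).prod - h ^ (p + 1) • ((a :: t).map c).sum)
        = fun h => (f a h - g a h - h ^ (p + 1) • c a) * (t.map fun i => f i h).prod
          + (h ^ (p + 1) • c a) * ((t.map fun i => f i h).prod - 1)
          + (g a h * ((t.map fun i => f i h).prod - (t.map fun i => g i h).prod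
              - h ^ (p + 1) • (t.map c).sum)
            + (g a h - 1) * (h ^ (p + 1) • (t.map c).sum)) := by
      funext h
      simp only [List.map_cons, List.prod_cons, List.sum_cons, smul_add, sub_mul, mul_sub,
        mul_one, one_mul]
      abel
    rw [heq]
    exact (hE1.add hE2).add (hE3.add hE4)

lemma gone_est_pin (A : Matrix (Fin d) (Fin d) ℝ) (a : ℝ) :
    (fun h : ℝ => exp ((a * h) • A) - 1) =O[𝓝 (0 : ℝ)] fun h : ℝ => h :=
  isBigO_transfer zero_le_one (fun X => pin_le_lin X) (gone_est_lin A a)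

lemma factor_est_pin (p : ℕ) (A B : Matrix (Fin d) (Fin d) ℝ) (a b : ℝ)
    (R : ℝ → Matrix (Fin d) (Fin d) ℝ) (hR : R =O[𝓝 (0 : ℝ)] fun h : ℝ => h ^ (p + 2)) :
    (fun h : ℝ => exp ((a * h) • A + (b * h ^ (p + 1)) • B + R h) - exp ((a * h) • A)
      - h ^ (p + 1) • (b • B)) =O[𝓝 (0 : ℝ)] fun h : ℝ => h ^ (p + 2) := by
  refine isBigO_transfer zero_le_one (fun X => pin_le_lin X) ?_
  refine factor_est_lin p A B a b R ?_
  exact isBigO_transfer (Nat.cast_nonneg d) (fun X => lin_le_pin X) hR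

end Pinned

theorem stmt1 (n s N p : ℕ) (hs : 1 ≤ s) (hN : 1 ≤ N)
    (A B : Fin N → Matrix (Fin n) (Fin n) ℝ)
    (α β : Fin s → Fin N → ℝ)
    (R : Fin s → Fin N → ℝ → Matrix (Fin n) (Fin n) ℝ)
    (hR : ∀ (i : Fin s) (m : Fin N), (R i m) =O[𝓝 (0 : ℝ)] fun h : ℝ => h ^ (p + 2)) :
    (fun h : ℝ =>
        ((List.finRange s).map fun i : Fin s =>
            ((List.finRange N).map fun m : Fin N =>
              exp ((α i m * h) • A m + (β i m * h ^ (p + 1)) • B m + R i m h)).prod).prod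
          - ((List.finRange s).map fun i : Fin s =>
              ((List.finRange N).map fun m : Fin N =>
                exp ((α i m * h) • A m)).prod).prod
          - h ^ (p + 1) • ∑ m : Fin N, ∑ i : Fin s, β i m • B m)
      =O[𝓝 (0 : ℝ)] fun h : ℝ => h ^ (p + 2) := by
  have hsum : (∑ m : Fin N, ∑ i : Fin s, β i m • B m)
      = ((List.finRange s).map fun i : Fin s =>
          ((List.finRange N).map fun m : Fin N => β i m • B m).sum).sum := by
    rw [Finset.sum_comm]
    simp only [Fin.sum_univ_def]
  have key := prod_key (d := n) p (List.finRange s)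
    (fun i h => ((List.finRange N).map fun m : Fin N =>
        exp ((α i m * h) • A m + (β i m * h ^ (p + 1)) • B m + R i m h)).prod)
    (fun i h => ((List.finRange N).map fun m : Fin N => exp ((α i m * h) • A m)).prod)
    (fun i => ((List.finRange N).map fun m : Fin N => β i m • B m).sum)
    (fun i _ => prod_one_est (List.finRange N) _
      (fun m _ => gone_est_pin (A m) (α i m)))
    (fun i _ => prod_key p (List.finRange N)
      (fun m h => exp ((α i m * h) • A m + (β i m * h ^ (p + 1)) • B m + R i m h))
      (fun m h => exp ((α i m * h) • A m))
      (fun m => β i m • B m)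
      (fun m _ => gone_est_pin (A m) (α i m))
      (fun m _ => factor_est_pin p (A m) (B m) (α i m) (β i m) (R i m) (hR i m)))
  rw [hsum]
  exact key
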